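/- In the disjoint-monitoring-sets game, for strategies σ1*, σ2* satisfying the detection and attack probability conditions of Theorem 1, one has U(σ1*, σ2) ≤ U(σ1*, σ2*) ≤ U(σ1, σ2*) for all mixed strategies σ1, σ2, i.e., (σ1*, σ2*) is a saddle point of U. -/

import Mathlib

open Finset

/-- A sensor positioning: each sensor is placed at a node or left unused (`none`). -/
abbrev Pos (n b1 : ℕ) := Fin b1 → Option (Fin n)

/-- A positioning is valid if no two sensors occupy the same node. -/
def ValidPos {n b1 : ℕ} (s : Pos n b1) : Prop :=
  ∀ j j' : Fin b1, s j = s j' → s j ≠ none → j = j'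

/-- The components of the network, grouped by the (mutually disjoint) monitoring
sets `E_{v_i}` of sizes `c i` (0-based indexing: node `i` is `v_{i+1}`). -/
abbrev Component (n : ℕ) (c : Fin n → ℕ) := (i : Fin n) × Fin (c i)

/-- A mixed inspection strategy: a probability distribution over valid positionings. -/
def MixedInsp (n b1 : ℕ) (σ : Pos n b1 → ℝ) : Prop :=
  (∀ s, 0 ≤ σ s) ∧ (∑ s, σ s = 1) ∧ (∀ s, σ s ≠ 0 → ValidPos s)

/-- A mixed attack strategy with budget `b2`: a distribution over attack plans. -/
def MixedAtk (n b2 : ℕ) (c : Fin n → ℕ) (τ : Finset (Component n c) → ℝ) : Prop :=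
  (∀ T, 0 ≤ τ T) ∧ (∑ T, τ T = 1) ∧ (∀ T, τ T ≠ 0 → T.card ≤ b2)

/-- Detection probability of node `i` under the mixed inspection strategy `σ`. -/
noncomputable def detProb {n b1 : ℕ} (lam : Fin b1 → ℝ) (σ : Pos n b1 → ℝ) (i : Fin n) : ℝ :=
  ∑ s, σ s * ∑ j, if s j = some i then lam j else 0

/-- Total attack probability mass placed on monitoring set `i` under `τ`,
i.e. `Σ_{e ∈ E_{v_i}} p_τ(e)`. -/
noncomputable def atkProb {n : ℕ} {c : Fin n → ℕ} (τ : Finset (Component n c) → ℝ) (i : Fin n) : ℝ :=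
  ∑ T, τ T * ((T.filter (fun e => e.1 = i)).card : ℝ)

/-- Expected number of undetected attacks; with mutually disjoint monitoring sets and
independent players' randomizations it equals `Σ_i q_i (1 - p_i)`. -/
noncomputable def U {n b1 : ℕ} (c : Fin n → ℕ) (lam : Fin b1 → ℝ)
    (σ : Pos n b1 → ℝ) (τ : Finset (Component n c) → ℝ) : ℝ :=
  ∑ i, atkProb τ i * (1 - detProb lam σ i)

/-- `Σ_{j=k+1}^n |E_{v_j}|` (1-based), i.e. sum of sizes with 0-based index `≥ k`. -/
def tailZ (n : ℕ) (c : Fin n → ℕ) (k : ℕ) : ℤ :=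
  ∑ j ∈ Finset.univ.filter (fun j : Fin n => k ≤ (j : ℕ)), (c j : ℤ)

/-- `|E_{v_{k+1}}|` (1-based), with the convention `|E_{v_{n+1}}| = 0`. -/
def cext (n : ℕ) (c : Fin n → ℕ) (k : ℕ) : ℤ :=
  if h : k < n then (c ⟨k, h⟩ : ℤ) else 0

/-- `k* = min { k ∈ [n] : b2 - Σ_{j=k+1}^n |E_{v_j}| ≥ k·|E_{v_{k+1}}| }`. -/
noncomputable def kstar (n b2 : ℕ) (c : Fin n → ℕ) : ℕ :=
  sInf {k | 1 ≤ k ∧ k ≤ n ∧ (k : ℤ) * cext n c k ≤ (b2 : ℤ) - tailZ n c k}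

/-- The value formula of Theorem 1:
`b2 - Σ_{i=1}^{b1} λ_i · min(|E_{v_i}|, (1/k*)(b2 - Σ_{j=k*+1}^n |E_{v_j}|))`. -/
noncomputable def valueFormula (n b1 b2 : ℕ) (c : Fin n → ℕ) (lam : Fin b1 → ℝ) : ℝ :=
  (b2 : ℝ) - ∑ j : Fin b1, lam j *
    min ((cext n c (j : ℕ) : ℝ))
      (((b2 : ℝ) - (tailZ n c (kstar n b2 c) : ℝ)) / (kstar n b2 c))



lemma tele (g : ℕ → ℝ) : ∀ a b : ℕ, a ≤ b →
    ∑ m ∈ Finset.Ico a b, (g m - g (m+1)) = g a - g b := by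
  intro a b h
  induction b, h using Nat.le_induction with
  | base => simp
  | succ b hb ih => rw [Finset.sum_Ico_succ_top hb, ih]; ring

lemma card_filter_lt_fin (m k : ℕ) (h : k ≤ m) :
    ((univ : Finset (Fin m)).filter fun i : Fin m => (i : ℕ) < k).card = k := by
  have : ((univ : Finset (Fin m)).filter fun i : Fin m => (i : ℕ) < k)
      = (univ : Finset (Fin k)).map (Fin.castLEEmb h) := by
    ext i
    simp only [mem_filter, mem_univ, true_and, mem_map, Fin.castLEEmb, Fin.castLE]
    constructor
    · intro hi; exact ⟨⟨i, hi⟩, rfl⟩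
    · rintro ⟨j, rfl⟩; simpa using j.2
  rw [this, Finset.card_map, Finset.card_univ, Fintype.card_fin]

lemma card_fiber {n : ℕ} (c : Fin n → ℕ) (i : Fin n) :
    ((univ : Finset ((i : Fin n) × Fin (c i))).filter fun e => e.1 = i).card = c i := by
  have : ((univ : Finset ((i : Fin n) × Fin (c i))).filter fun e => e.1 = i)
      = (univ : Finset (Fin (c i))).map
        ⟨fun x => ⟨i, x⟩, fun a b hab => by cases hab; rfl⟩ := by
    ext e
    simp only [mem_filter, mem_univ, true_and, mem_map, Function.Embedding.coeFn_mk]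
    constructor
    · rintro h; rcases e with ⟨i', x⟩; cases h; exact ⟨x, rfl⟩
    · rintro ⟨x, rfl⟩; rfl
  rw [this, Finset.card_map, Finset.card_univ, Fintype.card_fin]

/-- Sum of an antitone nonneg function over any set is at most its sum over a
"lower set" of at least the same cardinality. -/
lemma sum_le_sum_lowerset {n : ℕ} (q : Fin n → ℝ) (hq : Antitone q) (hq0 : ∀ i, 0 ≤ q i) :
    ∀ (d : ℕ) (S R : Finset (Fin n)), (S \ R).card ≤ d → S.card ≤ R.card →
    (∀ i j : Fin n, i ≤ j → j ∈ R → i ∈ R) → ∑ i ∈ S, q i ≤ ∑ i ∈ R, q i := by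
  intro d
  induction d with
  | zero =>
    intro S R hd hcard hlow
    have hsub : S ⊆ R := by
      intro x hx
      by_contra hxR
      have : x ∈ S \ R := mem_sdiff.mpr ⟨hx, hxR⟩
      have := card_pos.mpr ⟨x, this⟩
      omega
    exact sum_le_sum_of_subset_of_nonneg hsub (fun i _ _ => hq0 i)
  | succ d ih =>
    intro S R hd hcard hlow
    by_cases hsub : S ⊆ R
    · exact sum_le_sum_of_subset_of_nonneg hsub (fun i _ _ => hq0 i)
    · obtain ⟨a, haS, haR⟩ := not_subset.mp hsub
      have haSR : a ∈ S \ R := mem_sdiff.mpr ⟨haS, haR⟩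
      -- find b ∈ R \ S
      have hRS : (R \ S).Nonempty := by
        by_contra hne
        rw [not_nonempty_iff_eq_empty, sdiff_eq_empty_iff_subset] at hne
        have h1 : R.card ≤ (R ∩ S).card := by
          apply card_le_card; intro x hx; exact mem_inter.mpr ⟨hx, hne hx⟩
        have h2 : (R ∩ S).card < S.card := by
          apply card_lt_card
          constructor
          · intro x hx; exact (mem_inter.mp hx).2
          · intro hSsub
            exact haR (mem_inter.mp (hSsub haS)).1
        omega
      obtain ⟨b, hbRS⟩ := hRS
      obtain ⟨hbR, hbS⟩ := mem_sdiff.mp hbRS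
      have hba : b < a := by
        by_contra hba
        exact haR (hlow a b (le_of_not_gt hba) hbR)
      have hqab : q a ≤ q b := hq hba.le
      set S' := insert b (S.erase a) with hS'
      have hbnot : b ∉ S.erase a := fun h => hbS (mem_of_mem_erase h)
      have hsum' : ∑ i ∈ S', q i = q b + (∑ i ∈ S, q i - q a) := by
        rw [hS', sum_insert hbnot, Finset.sum_erase_eq_sub haS]
      have hcard' : S'.card = S.card := by
        rw [hS', card_insert_of_notMem hbnot, card_erase_of_mem haS]
        have : 1 ≤ S.card := card_pos.mpr ⟨a, haS⟩
        omega
      have hsd : (S' \ R).card ≤ d := by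
        have hsub2 : S' \ R ⊆ (S \ R).erase a := by
          intro x hx
          obtain ⟨hx1, hx2⟩ := mem_sdiff.mp hx
          rcases mem_insert.mp hx1 with h | h
          · exact absurd hbR (h ▸ hx2)
          · exact mem_erase.mpr ⟨ne_of_mem_erase h, mem_sdiff.mpr ⟨mem_of_mem_erase h, hx2⟩⟩
        calc (S' \ R).card ≤ ((S \ R).erase a).card := card_le_card hsub2
          _ = (S \ R).card - 1 := card_erase_of_mem haSR
          _ ≤ d := by omega
      have := ih S' R hsd (hcard' ▸ hcard) hlow
      linarith [hsum']

lemma assign_le {n b1 : ℕ} (hn : 0 < n) (hb1n : b1 ≤ n) (lam : Fin b1 → ℝ)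
    (hlam : Antitone lam) (hlam0 : ∀ j, 0 ≤ lam j)
    (q : Fin n → ℝ) (hq : Antitone q) (hq0 : ∀ i, 0 ≤ q i)
    (s : Pos n b1) (hs : ValidPos s) :
    ∑ j, lam j * (s j).elim 0 q ≤ ∑ j : Fin b1, lam j * q (Fin.castLE hb1n j) := by
  classical
  set lamext : ℕ → ℝ := fun m => if h : m < b1 then lam ⟨m, h⟩ else 0 with hlamext
  have hlamext0 : ∀ m, 0 ≤ lamext m := by
    intro m; simp only [hlamext]; split
    · exact hlam0 _
    · exact le_refl _
  have hd0 : ∀ m, 0 ≤ lamext m - lamext (m+1) := by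
    intro m
    rw [sub_nonneg]
    by_cases h1 : m + 1 < b1
    · have hm : m < b1 := by omega
      simp only [hlamext]
      rw [dif_pos h1, dif_pos hm]
      exact hlam (by simp [Fin.le_def])
    · simp only [hlamext]
      rw [dif_neg h1]
      split
      · exact hlam0 _
      · exact le_refl _
  -- decomposition of lam j
  have hdecomp : ∀ j : Fin b1, lam j = ∑ m ∈ Finset.Ico (j : ℕ) b1, (lamext m - lamext (m+1)) := by
    intro j
    rw [tele lamext _ _ j.2.le]
    simp [hlamext, j.2, Fin.eta]
  -- rewrite a weighted sum via layers
  have hlayer : ∀ x : Fin b1 → ℝ, ∑ j, lam j * x j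
      = ∑ m ∈ Finset.range b1, (lamext m - lamext (m+1)) *
          ∑ j ∈ univ.filter (fun j : Fin b1 => (j : ℕ) ≤ m), x j := by
    intro x
    calc ∑ j, lam j * x j
        = ∑ j : Fin b1, ∑ m ∈ Finset.range b1,
            (if (j : ℕ) ≤ m then (lamext m - lamext (m+1)) * x j else 0) := by
          apply Finset.sum_congr rfl
          intro j _
          rw [hdecomp j, Finset.sum_mul]
          have hIco : Finset.Ico (j : ℕ) b1 = (Finset.range b1).filter (fun m => (j : ℕ) ≤ m) := by
            ext m; simp [Finset.mem_Ico, Finset.mem_filter, Finset.mem_range]; omega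
          rw [hIco, Finset.sum_filter]
      _ = ∑ m ∈ Finset.range b1, ∑ j : Fin b1,
            (if (j : ℕ) ≤ m then (lamext m - lamext (m+1)) * x j else 0) := Finset.sum_comm
      _ = _ := by
          apply Finset.sum_congr rfl
          intro m _
          rw [Finset.mul_sum, Finset.sum_filter]
  rw [hlayer (fun j => (s j).elim 0 q), hlayer (fun j => q (Fin.castLE hb1n j))]
  apply Finset.sum_le_sum
  intro m _
  apply mul_le_mul_of_nonneg_left _ (hd0 m)
  -- key combinatorial inequality
  set Am := univ.filter (fun j : Fin b1 => (j : ℕ) ≤ m) with hAm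
  set Am' := Am.filter (fun j => s j ≠ none) with hAm'
  set i0 : Fin n := ⟨0, hn⟩ with hi0
  set g : Fin b1 → Fin n := fun j => (s j).getD i0 with hg
  have hsome : ∀ j ∈ Am', s j = some (g j) := by
    intro j hj
    have := (Finset.mem_filter.mp hj).2
    cases h : s j with
    | none => exact absurd h this
    | some x => simp [hg, h]
  have hginj : Set.InjOn g Am' := by
    intro j hj j' hj' hgj
    apply hs j j'
    · rw [hsome j hj, hsome j' hj', hgj]
    · rw [hsome j hj]; exact Option.some_ne_none _
  set S := Am'.image g with hS
  set R := Am.image (Fin.castLE hb1n) with hR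
  have hLHS : ∑ j ∈ Am, (s j).elim 0 q = ∑ i ∈ S, q i := by
    rw [hS, Finset.sum_image hginj]
    have h1 : ∑ j ∈ Am', q (g j) = ∑ j ∈ Am', (s j).elim 0 q :=
      Finset.sum_congr rfl (fun j hj => by rw [hsome j hj]; rfl)
    rw [h1]
    apply (Finset.sum_subset (Finset.filter_subset _ _) _).symm
    intro j hjAm hjn
    have hnone : s j = none := by
      by_contra h
      exact hjn (Finset.mem_filter.mpr ⟨hjAm, h⟩)
    rw [hnone]; rfl
  have hRHS : ∑ j ∈ Am, q (Fin.castLE hb1n j) = ∑ i ∈ R, q i := by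
    rw [hR, Finset.sum_image (fun a _ b _ hab => Fin.castLE_injective hb1n hab)]
  rw [hLHS, hRHS]
  apply sum_le_sum_lowerset q hq hq0 (S \ R).card S R le_rfl
  · calc S.card ≤ Am'.card := Finset.card_image_le
      _ ≤ Am.card := Finset.card_le_card (Finset.filter_subset _ _)
      _ = R.card := (Finset.card_image_of_injective _ (Fin.castLE_injective hb1n)).symm
  · intro i j hij hjR
    rw [hR, Finset.mem_image] at hjR
    obtain ⟨j0, hj0, rfl⟩ := hjR
    have hj0m : (j0 : ℕ) ≤ m := (Finset.mem_filter.mp hj0).2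
    have hib1 : (i : ℕ) < b1 := lt_of_le_of_lt hij j0.2
    rw [hR, Finset.mem_image]
    refine ⟨⟨(i : ℕ), hib1⟩, ?_, by simp [Fin.castLE, Fin.ext_iff]⟩
    apply Finset.mem_filter.mpr
    exact ⟨Finset.mem_univ _, le_trans (by exact_mod_cast hij) hj0m⟩

-- attack strategy facts
lemma atk_nonneg {n b2 : ℕ} {c : Fin n → ℕ} {τ : Finset (Component n c) → ℝ}
    (hτ : MixedAtk n b2 c τ) (i : Fin n) : 0 ≤ atkProb τ i :=
  Finset.sum_nonneg fun T _ => mul_nonneg (hτ.1 T) (Nat.cast_nonneg _)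

lemma atk_le_c {n b2 : ℕ} {c : Fin n → ℕ} {τ : Finset (Component n c) → ℝ}
    (hτ : MixedAtk n b2 c τ) (i : Fin n) : atkProb τ i ≤ (c i : ℝ) := by
  calc atkProb τ i ≤ ∑ T, τ T * (c i : ℝ) := by
        apply Finset.sum_le_sum
        intro T _
        apply mul_le_mul_of_nonneg_left _ (hτ.1 T)
        have h1 : (T.filter (fun e => e.1 = i)).card ≤ c i := by
          calc (T.filter (fun e => e.1 = i)).card
              ≤ ((univ : Finset (Component n c)).filter fun e => e.1 = i).card :=
                Finset.card_le_card (by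
                  intro e he
                  rw [Finset.mem_filter] at he ⊢
                  exact ⟨Finset.mem_univ _, he.2⟩)
            _ = c i := card_fiber c i
        exact_mod_cast h1
    _ = (c i : ℝ) := by rw [← Finset.sum_mul, hτ.2.1, one_mul]

lemma atk_sum_le {n b2 : ℕ} {c : Fin n → ℕ} {τ : Finset (Component n c) → ℝ}
    (hτ : MixedAtk n b2 c τ) : ∑ i, atkProb τ i ≤ (b2 : ℝ) := by
  have h1 : ∑ i, atkProb τ i = ∑ T, τ T * (T.card : ℝ) := by
    simp only [atkProb]
    rw [Finset.sum_comm]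
    apply Finset.sum_congr rfl
    intro T _
    rw [← Finset.mul_sum]
    congr 1
    rw [Finset.card_eq_sum_card_fiberwise (f := fun e : Component n c => e.1)
      (t := univ) (fun e _ => Finset.mem_univ _)]
    push_cast
    rfl
  rw [h1]
  calc ∑ T, τ T * (T.card : ℝ) ≤ ∑ T, τ T * (b2 : ℝ) := by
        apply Finset.sum_le_sum
        intro T _
        by_cases h : τ T = 0
        · simp [h]
        · exact mul_le_mul_of_nonneg_left (by exact_mod_cast hτ.2.2 T h) (hτ.1 T)
    _ = (b2 : ℝ) := by rw [← Finset.sum_mul, hτ.2.1, one_mul]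

/-- The minimax inequality certifying the equilibrium: for strategies
`σ1*, σ2*` satisfying the detection and attack probability conditions of Theorem 1,
`U(σ1*, σ2) ≤ U(σ1*, σ2*) ≤ U(σ1, σ2*)` for all mixed strategies `σ1, σ2`, i.e.
`(σ1*, σ2*)` is a saddle point of `U`. -/
theorem saddle_point (n b1 b2 : ℕ) (hn : 1 ≤ n) (hb1n : b1 ≤ n)
    (c : Fin n → ℕ) (hc : Antitone c) (hcpos : ∀ i, 1 ≤ c i)
    (lam : Fin b1 → ℝ) (hlam : Antitone lam) (hlam01 : ∀ j, 0 < lam j ∧ lam j ≤ 1)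
    (hb2 : 1 ≤ b2) (hb2E : b2 ≤ ∑ i, c i)
    (σs : Pos n b1 → ℝ) (τs : Finset (Component n c) → ℝ)
    (hσs : MixedInsp n b1 σs) (hτs : MixedAtk n b2 c τs)
    (hdet1 : ∀ i : Fin n, (i : ℕ) < kstar n b2 c →
      detProb lam σs i =
        (∑ j ∈ Finset.univ.filter (fun j : Fin b1 => (j : ℕ) < kstar n b2 c), lam j) /
          (kstar n b2 c))
    (hdet2 : ∀ i : Fin n, ∀ h : (i : ℕ) < b1, kstar n b2 c ≤ (i : ℕ) →
      detProb lam σs i = lam ⟨(i : ℕ), h⟩)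
    (hdet3 : ∀ i : Fin n, max b1 (kstar n b2 c) ≤ (i : ℕ) → detProb lam σs i = 0)
    (hatk1 : ∀ i : Fin n, (i : ℕ) < kstar n b2 c →
      atkProb τs i = ((b2 : ℝ) - (tailZ n c (kstar n b2 c) : ℝ)) / (kstar n b2 c))
    (hatk2 : ∀ i : Fin n, kstar n b2 c ≤ (i : ℕ) → atkProb τs i = (c i : ℝ)) :
    ∀ σ, MixedInsp n b1 σ → ∀ τ, MixedAtk n b2 c τ →
      U c lam σs τ ≤ U c lam σs τs ∧ U c lam σs τs ≤ U c lam σ τs := by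
  classical
  intro σ hσ τ hτ
  set k := kstar n b2 c with hkdef
  -- k* is a member of its defining set
  have hmem : 1 ≤ k ∧ k ≤ n ∧ (k : ℤ) * cext n c k ≤ (b2 : ℤ) - tailZ n c k := by
    have : k ∈ {k | 1 ≤ k ∧ k ≤ n ∧ (k : ℤ) * cext n c k ≤ (b2 : ℤ) - tailZ n c k} := by
      rw [hkdef, kstar]
      apply Nat.sInf_mem
      refine ⟨n, hn, le_refl n, ?_⟩
      have h1 : cext n c n = 0 := dif_neg (lt_irrefl n)
      have h2 : tailZ n c n = 0 := by
        rw [tailZ]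
        apply Finset.sum_eq_zero
        intro j hj
        rw [Finset.mem_filter] at hj
        exact absurd hj.2 (by have := j.2; omega)
      rw [h1, h2]
      simp
    exact this
  obtain ⟨hk1, hkn, hkey⟩ := hmem
  have hk0 : (0 : ℝ) < (k : ℝ) := by exact_mod_cast hk1
  set T : ℝ := ((tailZ n c k : ℤ) : ℝ) with hTdef
  set Q : ℝ := ((b2 : ℝ) - T) / (k : ℝ) with hQdef
  set Λ : ℝ := ∑ j ∈ univ.filter (fun j : Fin b1 => (j : ℕ) < k), lam j with hΛdef
  have hcext0 : (0 : ℤ) ≤ cext n c k := by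
    rw [cext]; split
    · exact Int.ofNat_nonneg _
    · exact le_refl 0
  have hTb2 : T ≤ (b2 : ℝ) := by
    have h1 : (0 : ℤ) ≤ (k : ℤ) * cext n c k :=
      mul_nonneg (Int.ofNat_nonneg _) hcext0
    have h2 : tailZ n c k ≤ (b2 : ℤ) := by linarith [hkey]
    rw [hTdef]; exact_mod_cast h2
  have hQ0 : 0 ≤ Q := by
    rw [hQdef]; apply div_nonneg _ hk0.le; linarith
  have hcQ : ∀ i : Fin n, k ≤ (i : ℕ) → (c i : ℝ) ≤ Q := by
    intro i hi
    have hkltn : k < n := lt_of_le_of_lt hi i.2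
    have h1 : (c i : ℤ) ≤ cext n c k := by
      rw [cext, dif_pos hkltn]
      exact_mod_cast hc (show (⟨k, hkltn⟩ : Fin n) ≤ i from hi)
    have h2 : (c i : ℤ) * (k : ℤ) ≤ (b2 : ℤ) - tailZ n c k := by
      calc (c i : ℤ) * (k : ℤ) ≤ (k : ℤ) * cext n c k := by
            rw [mul_comm]
            apply mul_le_mul_of_nonneg_left h1 (Int.ofNat_nonneg _)
        _ ≤ (b2 : ℤ) - tailZ n c k := hkey
    rw [hQdef, le_div_iff₀ hk0]
    rw [hTdef]
    exact_mod_cast h2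
  -- the equilibrium attack and detection profiles
  set q' : Fin n → ℝ := fun i => if (i : ℕ) < k then Q else (c i : ℝ) with hq'def
  set p' : Fin n → ℝ := fun i =>
    if (i : ℕ) < k then Λ / (k : ℝ)
    else if h : (i : ℕ) < b1 then lam ⟨(i : ℕ), h⟩ else 0 with hp'def
  have hq'eq : ∀ i, atkProb τs i = q' i := by
    intro i
    by_cases h : (i : ℕ) < k
    · rw [hq'def]; simp only [if_pos h]; exact hatk1 i h
    · rw [hq'def]; simp only [if_neg h]; exact hatk2 i (le_of_not_gt h)
  have hp'eq : ∀ i, detProb lam σs i = p' i := by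
    intro i
    by_cases h : (i : ℕ) < k
    · rw [hp'def]; simp only [if_pos h]; exact hdet1 i h
    · rw [hp'def]; simp only [if_neg h]
      by_cases h2 : (i : ℕ) < b1
      · rw [dif_pos h2]; exact hdet2 i h2 (le_of_not_gt h)
      · rw [dif_neg h2]
        exact hdet3 i (max_le (le_of_not_gt h2) (le_of_not_gt h))
  have hq'0 : ∀ i, 0 ≤ q' i := by
    intro i
    simp only [hq'def]
    split
    · exact hQ0
    · exact Nat.cast_nonneg _
  have hq'anti : Antitone q' := by
    intro i j hij
    simp only [hq'def]
    by_cases hi : (i : ℕ) < k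
    · simp only [if_pos hi]
      by_cases hj : (j : ℕ) < k
      · simp only [if_pos hj]
        exact le_refl _
      · simp only [if_neg hj]; exact hcQ j (le_of_not_gt hj)
    · have hj : ¬ (j : ℕ) < k := fun hjk => hi (lt_of_le_of_lt (by exact_mod_cast hij) hjk)
      simp only [if_neg hi, if_neg hj]
      exact_mod_cast hc hij
  -- Λ facts
  have hΛ0 : 0 ≤ Λ :=
    Finset.sum_nonneg fun j _ => (hlam01 j).1.le
  have hΛk : Λ ≤ (k : ℝ) := by
    have hcard : ((univ : Finset (Fin b1)).filter (fun j : Fin b1 => (j : ℕ) < k)).card ≤ k := by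
      calc ((univ : Finset (Fin b1)).filter (fun j : Fin b1 => (j : ℕ) < k)).card
          ≤ (Finset.range k).card := by
            apply Finset.card_le_card_of_injOn (f := fun j : Fin b1 => (j : ℕ))
            · intro j hj
              rw [Finset.mem_coe, Finset.mem_filter] at hj
              exact Finset.mem_range.mpr hj.2
            · intro a _ b _ hab
              exact Fin.ext hab
        _ = k := Finset.card_range k
    calc Λ ≤ ∑ j ∈ univ.filter (fun j : Fin b1 => (j : ℕ) < k), (1 : ℝ) :=
          Finset.sum_le_sum fun j _ => (hlam01 j).2
      _ = (((univ : Finset (Fin b1)).filter (fun j : Fin b1 => (j : ℕ) < k)).card : ℝ) := by simp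
      _ ≤ (k : ℝ) := by exact_mod_cast hcard
  have hp'le : ∀ i : Fin n, k ≤ (i : ℕ) → p' i ≤ Λ / (k : ℝ) := by
    intro i hi
    simp only [hp'def, if_neg (not_lt.mpr hi)]
    by_cases h2 : (i : ℕ) < b1
    · rw [dif_pos h2]
      have hkb1 : k ≤ b1 := le_trans hi (le_of_lt h2)
      have hcards : ((univ : Finset (Fin b1)).filter (fun j : Fin b1 => (j : ℕ) < k)).card = k :=
        card_filter_lt_fin b1 k hkb1
      rw [le_div_iff₀ hk0]
      calc lam ⟨(i : ℕ), h2⟩ * (k : ℝ)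
          = ∑ _j ∈ (univ : Finset (Fin b1)).filter (fun j : Fin b1 => (j : ℕ) < k), lam ⟨(i : ℕ), h2⟩ := by
            rw [Finset.sum_const, hcards, nsmul_eq_mul, mul_comm]
        _ ≤ Λ := by
            rw [hΛdef]
            apply Finset.sum_le_sum
            intro j hj
            rw [Finset.mem_filter] at hj
            apply hlam
            rw [Fin.le_def]
            simp only []
            omega
    · rw [dif_neg h2]
      exact div_nonneg hΛ0 hk0.le
  have hp'W : ∀ i : Fin n, Λ / (k : ℝ) ≤ 1 := by
    intro _
    rw [div_le_one hk0]
    exact hΛk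
  -- sum of q' equals b2
  have hcardn : ((univ : Finset (Fin n)).filter (fun i : Fin n => (i : ℕ) < k)).card = k :=
    card_filter_lt_fin n k hkn
  have hsumtail : ∑ i ∈ univ.filter (fun i : Fin n => ¬ (i : ℕ) < k), (c i : ℝ) = T := by
    rw [hTdef, tailZ]
    push_cast
    apply Finset.sum_congr _ (fun i _ => rfl)
    ext i
    simp [not_lt]
  have hsumq' : ∑ i, q' i = (b2 : ℝ) := by
    rw [hq'def, Finset.sum_ite, hsumtail, Finset.sum_const, hcardn, nsmul_eq_mul, hQdef]
    field_simp
    ring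
  constructor
  · -- Part A : U σs τ ≤ U σs τs
    have e1 : ∀ ρ : Finset (Component n c) → ℝ,
        U c lam σs ρ = ∑ i, atkProb ρ i * (1 - p' i) := by
      intro ρ
      rw [U]
      exact Finset.sum_congr rfl fun i _ => by rw [hp'eq i]
    rw [e1 τ, e1 τs]
    have e2 : ∑ i, atkProb τs i * (1 - p' i) = ∑ i, q' i * (1 - p' i) :=
      Finset.sum_congr rfl fun i _ => by rw [hq'eq i]
    rw [e2]
    have key1 : ∀ i : Fin n,
        (q' i - atkProb τ i) * (1 - Λ / (k : ℝ)) ≤ (q' i - atkProb τ i) * (1 - p' i) := by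
      intro i
      by_cases h : (i : ℕ) < k
      · have hpi : p' i = Λ / (k : ℝ) := by simp only [hp'def, if_pos h]
        rw [hpi]
      · apply mul_le_mul_of_nonneg_left
        · have := hp'le i (le_of_not_gt h)
          linarith
        · have hqi : q' i = (c i : ℝ) := by simp only [hq'def, if_neg h]
          rw [hqi]
          have := atk_le_c hτ i
          linarith
    have hsum1 : ∑ i, (q' i - atkProb τ i) * (1 - Λ / (k : ℝ))
        = ((b2 : ℝ) - ∑ i, atkProb τ i) * (1 - Λ / (k : ℝ)) := by
      rw [← Finset.sum_mul, Finset.sum_sub_distrib, hsumq']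
    have hsum2 : ∑ i, (q' i - atkProb τ i) * (1 - p' i)
        = ∑ i, q' i * (1 - p' i) - ∑ i, atkProb τ i * (1 - p' i) := by
      rw [← Finset.sum_sub_distrib]
      exact Finset.sum_congr rfl fun i _ => by ring
    have h3 := Finset.sum_le_sum (s := (univ : Finset (Fin n))) (fun i _ => key1 i)
    rw [hsum1, hsum2] at h3
    have h4 : 0 ≤ ((b2 : ℝ) - ∑ i, atkProb τ i) * (1 - Λ / (k : ℝ)) := by
      apply mul_nonneg
      · linarith [atk_sum_le hτ]
      · linarith [hp'W ⟨0, hn⟩]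
    linarith
  · -- Part B : U σs τs ≤ U σ τs
    have e1 : U c lam σ τs = ∑ i, q' i * (1 - detProb lam σ i) := by
      rw [U]; exact Finset.sum_congr rfl fun i _ => by rw [hq'eq i]
    have e2 : U c lam σs τs = ∑ i, q' i * (1 - p' i) := by
      rw [U]; exact Finset.sum_congr rfl fun i _ => by rw [hq'eq i, hp'eq i]
    rw [e1, e2]
    set B : ℝ := ∑ j : Fin b1, lam j * q' (Fin.castLE hb1n j) with hBdef
    have key : ∑ i, q' i * detProb lam σ i ≤ ∑ i, q' i * p' i := by
      -- upper bound for any mixed inspection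
      have hswap : ∑ i, q' i * detProb lam σ i
          = ∑ s, σ s * ∑ j, lam j * (s j).elim 0 q' := by
        simp only [detProb]
        calc ∑ i : Fin n, q' i * ∑ s : Pos n b1, σ s * ∑ j, (if s j = some i then lam j else 0)
            = ∑ i : Fin n, ∑ s : Pos n b1,
                q' i * (σ s * ∑ j, (if s j = some i then lam j else 0)) :=
              Finset.sum_congr rfl fun i _ => Finset.mul_sum _ _ _
          _ = ∑ s : Pos n b1, ∑ i : Fin n,
                q' i * (σ s * ∑ j, (if s j = some i then lam j else 0)) := Finset.sum_comm
          _ = ∑ s, σ s * ∑ j, lam j * (s j).elim 0 q' := by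
              apply Finset.sum_congr rfl
              intro s _
              have hstep : ∑ i : Fin n, q' i * (σ s * ∑ j, (if s j = some i then lam j else 0))
                  = σ s * ∑ i : Fin n, q' i * ∑ j, (if s j = some i then lam j else 0) := by
                rw [Finset.mul_sum]
                exact Finset.sum_congr rfl fun i _ => by ring
              rw [hstep]
              congr 1
              calc ∑ i : Fin n, q' i * ∑ j, (if s j = some i then lam j else 0)
                  = ∑ i : Fin n, ∑ j : Fin b1, q' i * (if s j = some i then lam j else 0) :=
                    Finset.sum_congr rfl fun i _ => Finset.mul_sum _ _ _
                _ = ∑ j : Fin b1, ∑ i : Fin n, q' i * (if s j = some i then lam j else 0) :=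
                    Finset.sum_comm
                _ = ∑ j, lam j * (s j).elim 0 q' := by
                    apply Finset.sum_congr rfl
                    intro j _
                    cases h : s j with
                    | none => simp [h]
                    | some i0 =>
                      simp only [h, Option.some.injEq, mul_ite, mul_zero]
                      rw [Finset.sum_ite_eq]
                      simp [mul_comm]
      have hub : ∑ i, q' i * detProb lam σ i ≤ B := by
        rw [hswap]
        calc ∑ s, σ s * ∑ j, lam j * (s j).elim 0 q'
            ≤ ∑ s : Pos n b1, σ s * B := by
              apply Finset.sum_le_sum
              intro s _
              by_cases hz : σ s = 0
              · rw [hz]; simp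
              · exact mul_le_mul_of_nonneg_left
                  (assign_le hn hb1n lam hlam (fun j => (hlam01 j).1.le)
                    q' hq'anti hq'0 s (hσ.2.2 s hz)) (hσ.1 s)
          _ = B := by rw [← Finset.sum_mul, hσ.2.1, one_mul]
      -- the value of the equilibrium profile equals B
      have hL : ∑ i, q' i * p' i
          = Λ * Q + ∑ i ∈ univ.filter (fun i : Fin n => ¬ (i : ℕ) < k),
              ((c i : ℝ) * (if h : (i : ℕ) < b1 then lam ⟨(i : ℕ), h⟩ else 0)) := by
        have hterm : ∀ i : Fin n, q' i * p' i
            = if (i : ℕ) < k then Q * (Λ / (k : ℝ))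
              else (c i : ℝ) * (if h : (i : ℕ) < b1 then lam ⟨(i : ℕ), h⟩ else 0) := by
          intro i
          by_cases h : (i : ℕ) < k <;> simp [hq'def, hp'def, h]
        rw [Finset.sum_congr rfl (fun i _ => hterm i), Finset.sum_ite,
          Finset.sum_const, hcardn, nsmul_eq_mul]
        congr 1
        field_simp
      have hR : B = Λ * Q + ∑ j ∈ univ.filter (fun j : Fin b1 => ¬ (j : ℕ) < k),
          (lam j * (c (Fin.castLE hb1n j) : ℝ)) := by
        rw [hBdef]
        have hterm : ∀ j : Fin b1, lam j * q' (Fin.castLE hb1n j)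
            = if (j : ℕ) < k then lam j * Q
              else lam j * (c (Fin.castLE hb1n j) : ℝ) := by
          intro j
          by_cases h : (j : ℕ) < k <;> simp [hq'def, Fin.castLE, h]
        rw [Finset.sum_congr rfl (fun j _ => hterm j), Finset.sum_ite, ← Finset.sum_mul]
      have hsec : ∑ i ∈ univ.filter (fun i : Fin n => ¬ (i : ℕ) < k),
            ((c i : ℝ) * (if h : (i : ℕ) < b1 then lam ⟨(i : ℕ), h⟩ else 0))
          = ∑ j ∈ univ.filter (fun j : Fin b1 => ¬ (j : ℕ) < k),
            (lam j * (c (Fin.castLE hb1n j) : ℝ)) := by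
        have hshrink : ∑ i ∈ univ.filter (fun i : Fin n => ¬ (i : ℕ) < k),
              ((c i : ℝ) * (if h : (i : ℕ) < b1 then lam ⟨(i : ℕ), h⟩ else 0))
            = ∑ i ∈ univ.filter (fun i : Fin n => ¬ (i : ℕ) < k ∧ (i : ℕ) < b1),
              ((c i : ℝ) * (if h : (i : ℕ) < b1 then lam ⟨(i : ℕ), h⟩ else 0)) := by
          symm
          apply Finset.sum_subset
          · intro x hx
            rw [Finset.mem_filter] at hx ⊢
            exact ⟨hx.1, hx.2.1⟩
          · intro x hx hx2
            have hxb1 : ¬ (x : ℕ) < b1 := by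
              intro hlt
              rw [Finset.mem_filter] at hx
              exact hx2 (Finset.mem_filter.mpr ⟨hx.1, hx.2, hlt⟩)
            rw [dif_neg hxb1, mul_zero]
        refine Eq.trans hshrink ?_
        refine Finset.sum_bij'
          (fun (i : Fin n) (hi : i ∈ univ.filter (fun i : Fin n => ¬ (i : ℕ) < k ∧ (i : ℕ) < b1)) =>
            (⟨(i : ℕ), (Finset.mem_filter.mp hi).2.2⟩ : Fin b1))
          (fun (j : Fin b1) (_ : j ∈ univ.filter (fun j : Fin b1 => ¬ (j : ℕ) < k)) =>
            Fin.castLE hb1n j) ?_ ?_ ?_ ?_ ?_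
        · intro a ha
          rw [Finset.mem_filter] at ha ⊢
          exact ⟨Finset.mem_univ _, ha.2.1⟩
        · intro a ha
          rw [Finset.mem_filter] at ha ⊢
          refine ⟨Finset.mem_univ _, ?_, ?_⟩
          · exact ha.2
          · exact a.2
        · intro a _
          apply Fin.ext
          rfl
        · intro a _
          apply Fin.ext
          rfl
        · intro a ha
          rw [dif_pos (Finset.mem_filter.mp ha).2.2]
          rw [mul_comm]
          congr 1
      have : ∑ i, q' i * p' i = B := by rw [hL, hR, hsec]
      rw [this]
      exact hub
    have expand : ∀ f : Fin n → ℝ,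
        ∑ i, q' i * (1 - f i) = ∑ i, q' i - ∑ i, q' i * f i := by
      intro f
      rw [← Finset.sum_sub_distrib]
      exact Finset.sum_congr rfl fun i _ => by ring
    rw [expand (fun i => detProb lam σ i), expand p']
    linarith [key]
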